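/- arXiv:1807.08837 — 3 statements merged into one kernel-verified Lean document; each statement's English description precedes it below -/
import Mathlib

section
/- (Pliss-type density of hyperbolic times) If $(\xi,p)\in\Sigma_N\times I$ satisfies $\chi_+(\xi,p)>\chi-\varepsilon>0$, then $(\xi,p)$ has infinitely many hyperbolic times with exponent $\chi-\varepsilon$, and moreover the set of such hyperbolic times has positive lower density: there is $d_0>0$ with $\liminf_{n\to\infty}\frac1n\#\{1\le k\le n: k\text{ is a hyperbolic time for }(\xi,p)\}\ge d_0$. -/
/-!
Along the orbit `x_k = fw f ξ k p` put `b_k = log |f'_{ξ_k}(x_k)| - ρ` with `ρ = χ - ε`. By the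
chain rule, `n` is a hyperbolic time exactly when every tail sum `b_m + ⋯ + b_n` is nonnegative
(a Pliss time of `b`). The `b_k` are bounded above by some `B`, since the derivatives are continuous
on the compact interval, and their averages tend to `χ₊ - ρ > 0`. If `n` is not a Pliss time, the
partial sum `S_{n+1}` falls below an earlier `S_m`; so by strong induction
`S_n ≤ B · #{Pliss times < n}`, and the Pliss times have lower density at least `(χ₊ - ρ) / B`.
-/

open Set Filter MeasureTheory Topology

noncomputable section

/-- The base space `Σ_N = {1,…,N}^ℤ`. -/
abbrev BSeq (N : ℕ) := ℤ → Fin N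

/-- The shift map on bilateral sequences. -/
def shiftSeq {α : Type*} (ξ : ℤ → α) : ℤ → α := fun n => ξ (n + 1)

/-- The unit interval. -/
def I01 : Set ℝ := Set.Icc 0 1

/-- Forward composition of fiber maps: `fw h ξ n = h (ξ (n-1)) ∘ ⋯ ∘ h (ξ 0)`. -/
def fw {α : Type*} (h : α → ℝ → ℝ) (ξ : ℤ → α) : ℕ → ℝ → ℝ
  | 0 => id
  | n + 1 => fun p => h (ξ (n : ℤ)) (fw h ξ n p)

/-- The step skew-product `F(ξ,p) = (σξ, f_{ξ₀}(p))`. -/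
def Fmap {N : ℕ} (f : Fin N → ℝ → ℝ) (z : BSeq N × ℝ) : BSeq N × ℝ :=
  (shiftSeq z.1, f (z.1 0) z.2)


/-- `n` is a hyperbolic time for `(ξ,p)` with exponent `ρ`:
for all `m = 0,…,n`, `|(f_{ξ_m⋯ξ_n})'(f_{ξ_0⋯ξ_{m-1}}(p))| ≥ e^{(n-m+1)ρ}`. -/
def hypTime {N : ℕ} (f : Fin N → ℝ → ℝ) (ξ : BSeq N) (p : ℝ) (ρ : ℝ) (n : ℕ) : Prop :=
  ∀ m : ℕ, m ≤ n →
    Real.exp (((n - m + 1 : ℕ) : ℝ) * ρ) ≤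
      |deriv (fw f (fun j => ξ (j + (m : ℤ))) (n - m + 1)) (fw f ξ m p)|

section FiberComposition

variable {α : Type*} {h : α → ℝ → ℝ} {s : Set ℝ}

theorem fw_shift_apply (η : ℤ → α) (q : ℝ) (m k : ℕ) :
    fw h (fun j => η (j + m)) k (fw h η m q) = fw h η (m + k) q := by
  induction k with
  | zero => rfl
  | succ k ih =>
    rw [← add_assoc]
    simp only [fw, ih, Nat.cast_add, add_comm (k : ℤ)]

theorem mapsTo_fw (hmap : ∀ i, MapsTo (h i) s s) (η : ℤ → α) (n : ℕ) :
    MapsTo (fw h η n) s s := by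
  induction n with
  | zero => exact mapsTo_id s
  | succ n ih => exact (hmap _).comp ih

theorem hasDerivAt_fw (hmap : ∀ i, MapsTo (h i) s s)
    (hdiff : ∀ i, ∀ q ∈ s, DifferentiableAt ℝ (h i) q) (η : ℤ → α) {q : ℝ} (hq : q ∈ s)
    (n : ℕ) :
    HasDerivAt (fw h η n) (∏ k ∈ Finset.range n, deriv (h (η k)) (fw h η k q)) q := by
  induction n with
  | zero => simpa [fw] using hasDerivAt_id q
  | succ n ih =>
    rw [Finset.prod_range_succ, mul_comm]
    exact (hdiff _ _ (mapsTo_fw hmap η n hq)).hasDerivAt.comp q ih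

theorem deriv_fw_ne_zero (hmap : ∀ i, MapsTo (h i) s s)
    (hder : ∀ i, ∀ q ∈ s, deriv (h i) q ≠ 0) (η : ℤ → α) {q : ℝ} (hq : q ∈ s) (n : ℕ) :
    deriv (fw h η n) q ≠ 0 := by
  have hdiff i q hq := differentiableAt_of_deriv_ne_zero (hder i q hq)
  rw [(hasDerivAt_fw hmap hdiff η hq n).deriv]
  exact Finset.prod_ne_zero_iff.2 fun k _ => hder _ _ (mapsTo_fw hmap η k hq)

theorem log_abs_deriv_fw (hmap : ∀ i, MapsTo (h i) s s)
    (hder : ∀ i, ∀ q ∈ s, deriv (h i) q ≠ 0) (η : ℤ → α) {q : ℝ} (hq : q ∈ s) (n : ℕ) :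
    Real.log |deriv (fw h η n) q| =
      ∑ k ∈ Finset.range n, Real.log |deriv (h (η k)) (fw h η k q)| := by
  have hdiff i q hq := differentiableAt_of_deriv_ne_zero (hder i q hq)
  rw [(hasDerivAt_fw hmap hdiff η hq n).deriv, Finset.abs_prod,
    Real.log_prod fun k _ => abs_ne_zero.2 (hder _ _ (mapsTo_fw hmap η k hq))]

theorem log_abs_deriv_fw_shift (hmap : ∀ i, MapsTo (h i) s s)
    (hder : ∀ i, ∀ q ∈ s, deriv (h i) q ≠ 0) (η : ℤ → α) {q : ℝ} (hq : q ∈ s) (m L : ℕ) :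
    Real.log |deriv (fw h (fun j => η (j + m)) L) (fw h η m q)| =
      ∑ k ∈ Finset.Ico m (m + L), Real.log |deriv (h (η k)) (fw h η k q)| := by
  rw [log_abs_deriv_fw hmap hder _ (mapsTo_fw hmap η m hq), Finset.sum_Ico_eq_sum_range,
    Nat.add_sub_cancel_left]
  refine Finset.sum_congr rfl fun k _ => ?_
  rw [fw_shift_apply, add_comm (k : ℤ), Nat.cast_add]

end FiberComposition

theorem ncard_Icc_one_inter_le (s : Set ℕ) (n : ℕ) : (Icc 1 n ∩ s).ncard ≤ n := by
  simpa using Set.ncard_inter_le_ncard_left (Icc 1 n) s (Set.finite_Icc 1 n)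

theorem card_filter_range_le_ncard_Icc_one_inter_add_one (P : ℕ → Prop) [DecidablePred P]
    (n : ℕ) : {m ∈ Finset.range n | P m}.card ≤ (Icc 1 n ∩ {k | P k}).ncard + 1 := by
  have hsub : (↑{m ∈ Finset.range n | P m} : Set ℕ) ⊆ insert 0 (Icc 1 n ∩ {k | P k}) := by
    intro m hm
    simp only [Finset.coe_filter, Finset.mem_range] at hm
    rcases Nat.eq_zero_or_pos m with rfl | hpos
    · exact mem_insert 0 _
    · exact mem_insert_of_mem 0 ⟨⟨hpos, hm.1.le⟩, hm.2⟩
  calc {m ∈ Finset.range n | P m}.card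
      = (↑{m ∈ Finset.range n | P m} : Set ℕ).ncard := (Set.ncard_coe_finset _).symm
    _ ≤ (insert 0 (Icc 1 n ∩ {k | P k})).ncard :=
      Set.ncard_le_ncard hsub (((Set.finite_Icc 1 n).inter_of_left _).insert 0)
    _ ≤ (Icc 1 n ∩ {k | P k}).ncard + 1 := Set.ncard_insert_le 0 _

theorem Set.infinite_of_eventually_le_ncard_Icc_one_inter_div {s : Set ℕ} {d : ℝ} (hd : 0 < d)
    (h : ∀ᶠ n : ℕ in atTop, d ≤ ((Icc 1 n ∩ s).ncard : ℝ) / n) : s.Infinite := by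
  intro hfin
  have hsmall : ∀ᶠ n : ℕ in atTop, (s.ncard : ℝ) / n < d :=
    (tendsto_const_div_atTop_nhds_zero_nat (s.ncard : ℝ)).eventually (eventually_lt_nhds hd)
  obtain ⟨n, hdn, hn⟩ := (h.and hsmall).exists
  have hle : ((Icc 1 n ∩ s).ncard : ℝ) / n ≤ (s.ncard : ℝ) / n := by
    gcongr
    exact inter_subset_right
  linarith

theorem le_liminf_ncard_Icc_one_inter_div {s : Set ℕ} {d : ℝ}
    (h : ∀ᶠ n : ℕ in atTop, d ≤ ((Icc 1 n ∩ s).ncard : ℝ) / n) :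
    d ≤ liminf (fun n : ℕ => ((Icc 1 n ∩ s).ncard : ℝ) / n) atTop := by
  refine le_liminf_of_le (isCoboundedUnder_ge_of_le atTop (x := 1) fun n => ?_) h
  exact div_le_one_of_le₀ (by exact_mod_cast ncard_Icc_one_inter_le s n) n.cast_nonneg

section Pliss

open scoped Classical

def IsPlissTime (b : ℕ → ℝ) (n : ℕ) : Prop :=
  ∀ m ≤ n, 0 ≤ ∑ j ∈ Finset.Ico m (n + 1), b j

theorem sum_range_le_mul_card_isPlissTime {b : ℕ → ℝ} {B : ℝ}
    (hB : 0 ≤ B) (hb : ∀ k, b k ≤ B) (n : ℕ) :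
    ∑ k ∈ Finset.range n, b k ≤ B * {m ∈ Finset.range n | IsPlissTime b m}.card := by
  induction n using Nat.strong_induction_on with
  | _ n ih =>
  match n with
  | 0 => simp
  | n + 1 =>
    by_cases hn : IsPlissTime b n
    · rw [Finset.sum_range_succ, Finset.range_add_one, Finset.filter_insert, if_pos hn,
        Finset.card_insert_of_notMem (by simp), Nat.cast_succ, mul_add_one]
      exact add_le_add (ih n n.lt_succ_self) (hb n)
    · obtain ⟨m, hm, hneg⟩ : ∃ m ≤ n, ∑ j ∈ Finset.Ico m (n + 1), b j < 0 := by
        simpa [IsPlissTime] using hn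
      rw [Finset.sum_Ico_eq_sub _ (by omega)] at hneg
      have hcard : ({k ∈ Finset.range m | IsPlissTime b k}.card : ℝ) ≤
          {k ∈ Finset.range (n + 1) | IsPlissTime b k}.card := by
        exact_mod_cast Finset.card_le_card
          (Finset.filter_subset_filter _ (Finset.range_subset_range.2 (by omega)))
      calc ∑ k ∈ Finset.range (n + 1), b k
          ≤ ∑ k ∈ Finset.range m, b k := by linarith
        _ ≤ B * {k ∈ Finset.range m | IsPlissTime b k}.card := ih m (by omega)
        _ ≤ B * {k ∈ Finset.range (n + 1) | IsPlissTime b k}.card := by gcongr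

theorem eventually_le_ncard_isPlissTime_div {b : ℕ → ℝ} {B δ : ℝ} (hB : 0 < B)
    (hb : ∀ k, b k ≤ B) (hδ : 0 < δ)
    (havg : Tendsto (fun n : ℕ => (n : ℝ)⁻¹ * ∑ k ∈ Finset.range n, b k) atTop (𝓝 δ)) :
    ∀ᶠ n : ℕ in atTop, δ / (2 * B) ≤ ((Icc 1 n ∩ {k | IsPlissTime b k}).ncard : ℝ) / n := by
  set c : ℕ → ℝ := fun n => ((Icc 1 n ∩ {k | IsPlissTime b k}).ncard : ℝ)
  have hsum (n : ℕ) : ∑ k ∈ Finset.range n, b k ≤ B * (c n + 1) :=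
    (sum_range_le_mul_card_isPlissTime hB.le hb n).trans <| by
      simp only [c]
      gcongr
      exact_mod_cast card_filter_range_le_ncard_Icc_one_inter_add_one (IsPlissTime b) n
  have hlower : Tendsto (fun n : ℕ => (n : ℝ)⁻¹ * (∑ k ∈ Finset.range n, b k) / B - (n : ℝ)⁻¹)
      atTop (𝓝 (δ / B)) := by
    simpa using (havg.div_const B).sub tendsto_inv_atTop_nhds_zero_nat
  have hδB : δ / (2 * B) < δ / B := by
    rw [mul_comm, ← div_div]
    exact half_lt_self (div_pos hδ hB)
  filter_upwards [hlower.eventually (eventually_ge_nhds hδB), eventually_gt_atTop 0]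
    with n hn hpos
  calc δ / (2 * B) ≤ (n : ℝ)⁻¹ * (∑ k ∈ Finset.range n, b k) / B - (n : ℝ)⁻¹ := hn
    _ ≤ (n : ℝ)⁻¹ * (B * (c n + 1)) / B - (n : ℝ)⁻¹ := by gcongr; exact hsum n
    _ = c n / n := by field_simp; ring

theorem infinite_and_le_liminf_ncard_isPlissTime {b : ℕ → ℝ} {B δ : ℝ} (hb : ∀ k, b k ≤ B)
    (hδ : 0 < δ)
    (havg : Tendsto (fun n : ℕ => (n : ℝ)⁻¹ * ∑ k ∈ Finset.range n, b k) atTop (𝓝 δ)) :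
    {n | IsPlissTime b n}.Infinite ∧ ∃ d0 : ℝ, 0 < d0 ∧
      d0 ≤ liminf (fun n : ℕ => ((Icc 1 n ∩ {k | IsPlissTime b k}).ncard : ℝ) / n) atTop := by
  have hB : 0 < max B 1 := lt_max_of_lt_right one_pos
  have hev := eventually_le_ncard_isPlissTime_div hB (fun k => (hb k).trans (le_max_left B 1))
    hδ havg
  have hd : 0 < δ / (2 * max B 1) := by positivity
  exact ⟨Set.infinite_of_eventually_le_ncard_Icc_one_inter_div hd hev, _, hd,
    le_liminf_ncard_Icc_one_inter_div hev⟩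

end Pliss

theorem exists_abs_deriv_le_of_contDiffOn {f : ℝ → ℝ} {s : Set ℝ} (hs : IsCompact s)
    (hs' : UniqueDiffOn ℝ s) (hf : ContDiffOn ℝ 1 f s)
    (hdiff : ∀ q ∈ s, DifferentiableAt ℝ f q) : ∃ C, ∀ q ∈ s, |deriv f q| ≤ C := by
  obtain ⟨C, hC⟩ := hs.exists_bound_of_continuousOn (hf.continuousOn_derivWithin hs' le_rfl)
  refine ⟨C, fun q hq => ?_⟩
  rw [← (hdiff q hq).derivWithin (hs' q hq), ← Real.norm_eq_abs]
  exact hC q hq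

theorem hypTime_iff_isPlissTime {N : ℕ} {f : Fin N → ℝ → ℝ} (hmap : ∀ i, MapsTo (f i) I01 I01)
    (hder : ∀ i, ∀ q ∈ I01, deriv (f i) q ≠ 0) (ξ : BSeq N) {p : ℝ} (hp : p ∈ I01) (ρ : ℝ)
    (n : ℕ) :
    hypTime f ξ p ρ n ↔
      IsPlissTime (fun k => Real.log |deriv (f (ξ k)) (fw f ξ k p)| - ρ) n := by
  refine forall₂_congr fun m hm => ?_
  rw [← Real.le_log_iff_exp_le
      (abs_pos.2 (deriv_fw_ne_zero hmap hder _ (mapsTo_fw hmap ξ m hp) _)),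
    log_abs_deriv_fw_shift hmap hder ξ hp, Finset.sum_sub_distrib, Finset.sum_const,
    Nat.card_Ico, nsmul_eq_mul, sub_nonneg, show m + (n - m + 1) = n + 1 by omega,
    Nat.sub_add_comm hm]

theorem hyperbolic_times_positive_density_general
    {N : ℕ} (f : Fin N → ℝ → ℝ)
    (hC1 : ∀ i, ContDiffOn ℝ 1 (f i) I01)
    (hmap : ∀ i, Set.MapsTo (f i) I01 I01)
    (hder : ∀ i, ∀ p ∈ I01, deriv (f i) p ≠ 0)
    (ξ : BSeq N) (p : ℝ) (hp : p ∈ I01)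
    (χ ε χplus : ℝ)
    (hlim : Filter.Tendsto
      (fun n : ℕ => (n : ℝ)⁻¹ * Real.log |deriv (fw f ξ n) p|)
      Filter.atTop (nhds χplus))
    (hgt : χ - ε < χplus) :
    {n : ℕ | hypTime f ξ p (χ - ε) n}.Infinite ∧
    ∃ d0 : ℝ, 0 < d0 ∧
      d0 ≤ Filter.liminf
        (fun n : ℕ =>
          ((Set.Icc 1 n ∩ {k : ℕ | hypTime f ξ p (χ - ε) k}).ncard : ℝ) / n)
        Filter.atTop := by
  set a : ℕ → ℝ := fun k => Real.log |deriv (f (ξ k)) (fw f ξ k p)|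
  choose C hC using fun i => exists_abs_deriv_le_of_contDiffOn isCompact_Icc
    (uniqueDiffOn_Icc zero_lt_one) (hC1 i) fun q hq =>
      differentiableAt_of_deriv_ne_zero (hder i q hq)
  obtain ⟨M, hM⟩ := (Set.finite_range C).bddAbove
  have hbound (k : ℕ) : a k - (χ - ε) ≤ Real.log M - (χ - ε) := by
    have hx := mapsTo_fw hmap ξ k hp
    gcongr
    exact Real.log_le_log (abs_pos.2 (hder _ _ hx)) ((hC _ _ hx).trans (hM (mem_range_self _)))
  have havg : Tendsto (fun n : ℕ => (n : ℝ)⁻¹ * ∑ k ∈ Finset.range n, (a k - (χ - ε))) atTop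
      (𝓝 (χplus - (χ - ε))) := by
    refine (hlim.sub_const (χ - ε)).congr' ?_
    filter_upwards [eventually_ne_atTop 0] with n hn
    rw [Finset.sum_sub_distrib, Finset.sum_const, Finset.card_range, nsmul_eq_mul,
      ← log_abs_deriv_fw hmap hder ξ hp]
    field_simp
  have hset : {n | hypTime f ξ p (χ - ε) n} = {n | IsPlissTime (fun k => a k - (χ - ε)) n} :=
    Set.ext fun n => hypTime_iff_isPlissTime hmap hder ξ hp _ n
  rw [hset]
  exact infinite_and_le_liminf_ncard_isPlissTime hbound (sub_pos.2 hgt) havg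

/-- **Pliss-type lemma.** If the forward fiber Lyapunov exponent of `(ξ,p)` exceeds
`χ - ε > 0`, then `(ξ,p)` has infinitely many hyperbolic times with exponent `χ - ε`,
with positive lower density. -/
theorem hyperbolic_times_positive_density
    {N : ℕ} (f : Fin N → ℝ → ℝ)
    (hC1 : ∀ i, ContDiffOn ℝ 1 (f i) I01)
    (hinj : ∀ i, Set.InjOn (f i) I01)
    (hmap : ∀ i, Set.MapsTo (f i) I01 I01)
    (hder : ∀ i, ∀ p ∈ I01, deriv (f i) p ≠ 0)
    (ξ : BSeq N) (p : ℝ) (hp : p ∈ I01)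
    (χ ε χplus : ℝ) (hpos : 0 < χ - ε)
    (hlim : Filter.Tendsto
      (fun n : ℕ => (n : ℝ)⁻¹ * Real.log |deriv (fw f ξ n) p|)
      Filter.atTop (nhds χplus))
    (hgt : χ - ε < χplus) :
    {n : ℕ | hypTime f ξ p (χ - ε) n}.Infinite ∧
    ∃ d0 : ℝ, 0 < d0 ∧
      d0 ≤ Filter.liminf
        (fun n : ℕ =>
          ((Set.Icc 1 n ∩ {k : ℕ | hypTime f ξ p (χ - ε) k}).ncard : ℝ) / n)
        Filter.atTop :=
  hyperbolic_times_positive_density_general f hC1 hmap hder ξ p hp χ ε χplus hlim hgt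
end
end

section
/- (Projection of bony graphs to bi-bony graphs) Let $\lambda$ be a symmetric Markov measure on $\Sigma_A$ with projection $\bar\lambda=\pi_*\lambda$. If $B\subset\Sigma_A\times I$ is a bony graph with respect to $\lambda$ (each fiber slice $B_\omega$ is a single point for $\lambda$-a.e. $\omega$ and an interval in the remaining points), then $\Pi(B)$ is a bi-bony graph with respect to $\bar\lambda$, i.e. the union of the two bony graphs $\Pi|_{C\times I}(B)$ and $\Pi|_{(\Sigma_A\setminus C)\times I}(B)$. Moreover, if $B$ is continuous (the fiber slices vary upper semicontinuously: for all $\omega$ and $\varepsilon>0$ there is $\delta>0$ such that $d(\eta,\omega)<\delta$ implies $B_\eta\subset U_\varepsilon(B_\omega)$), then $\Pi(B)$ is continuous too. -/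
open Set Filter MeasureTheory Topology

noncomputable section

/-- Doubled symbol set `{1,…,2N}`: `(i, false)` is `i`, `(i, true)` is `i + N`. -/
abbrev DSym (N : ℕ) := Fin N × Bool

/-- `A`-admissibility for the orientation-doubling transition matrix, where
`part i = true` iff `f i` is orientation preserving. -/
def Admissible {N : ℕ} (part : Fin N → Bool) (ω : ℤ → DSym N) : Prop :=
  ∀ n : ℤ, (ω (n + 1)).2 = xor ((ω n).2) (!(part (ω n).1))

/-- The subshift of finite type `Σ_A` of `A`-admissible bilateral sequences. -/
abbrev SigmaA (N : ℕ) (part : Fin N → Bool) := {ω : ℤ → DSym N // Admissible part ω}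

/-- The shift map `σ_A` on `Σ_A`. -/
def shiftA {N : ℕ} {part : Fin N → Bool} (ω : SigmaA N part) : SigmaA N part :=
  ⟨shiftSeq ω.1, fun n => ω.2 (n + 1)⟩

/-- The 2-to-1 projection `π : Σ_A → Σ_N`, `π(ω)_n = ω_n mod N`. -/
def piA {N : ℕ} {part : Fin N → Bool} (ω : SigmaA N part) : BSeq N :=
  fun n => (ω.1 n).1

/-- The reflection `R(x) = 1 - x`. -/
def R : ℝ → ℝ := fun x => 1 - x

/-- The fiber maps of the extended step skew-product:
`g_i = f_i`, `g_{i+N} = R∘f_i∘R` for orientation-preserving `f_i`, and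
`g_i = R∘f_i`, `g_{i+N} = f_i∘R` for orientation-reversing `f_i`. -/
def gmap {N : ℕ} (f : Fin N → ℝ → ℝ) (part : Fin N → Bool) : DSym N → ℝ → ℝ :=
  fun s =>
    if part s.1 then (if s.2 then R ∘ f s.1 ∘ R else f s.1)
    else (if s.2 then f s.1 ∘ R else R ∘ f s.1)

/-- The extended step skew-product `G(ω,x) = (σ_A ω, g_{ω₀}(x))`. -/
def Gmap {N : ℕ} {part : Fin N → Bool} (f : Fin N → ℝ → ℝ)
    (z : SigmaA N part × ℝ) : SigmaA N part × ℝ :=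
  (shiftA z.1, gmap f part (z.1.1 0) z.2)

/-- The 2-to-1 projection `Π : Σ_A × I → Σ_N × I`. -/
def PiMap {N : ℕ} {part : Fin N → Bool} (z : SigmaA N part × ℝ) : BSeq N × ℝ :=
  (piA z.1, if (z.1.1 0).2 then R z.2 else z.2)

/-- Orientation hypothesis: `part` records which fiber maps preserve orientation. -/
def OrientPart {N : ℕ} (f : Fin N → ℝ → ℝ) (part : Fin N → Bool) : Prop :=
  ∀ i, (part i = true → StrictMonoOn (f i) I01) ∧ (part i = false → StrictAntiOn (f i) I01)

open scoped ENNReal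

/-- The cylinder `[m; w₀ … w_k]`. -/
def cylinder {α : Type*} (m : ℤ) (k : ℕ) (w : ℕ → α) : Set (ℤ → α) :=
  {η | ∀ i : ℕ, i ≤ k → η (m + i) = w i}

/-- `lam` is the Markov measure with probability vector `p` and transition matrix `P`. -/
def IsMarkov {α : Type*} [MeasurableSpace α] (lam : MeasureTheory.Measure (ℤ → α))
    (p : α → ℝ≥0∞) (P : α → α → ℝ≥0∞) : Prop :=
  ∀ (m : ℤ) (k : ℕ) (w : ℕ → α),
    lam (cylinder m k w) = p (w 0) * ∏ i ∈ Finset.range k, P (w i) (w (i + 1))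

/-- Stochasticity and stationarity of the pair `(p, P)`. -/
def IsStochastic {α : Type*} [Fintype α] (p : α → ℝ≥0∞) (P : α → α → ℝ≥0∞) : Prop :=
  (∑ a, p a) = 1 ∧ (∀ a, (∑ b, P a b) = 1) ∧ (∀ b, (∑ a, p a * P a b) = p b)

/-- Symmetry of a Markov pair on the doubled alphabet: `p_i = p_{i+N}`,
`P_{ij} = P_{(i+N)(j+N)}` and `P_{i(j+N)} = P_{(i+N)j}`. -/
def SymMarkov {N : ℕ} (p : DSym N → ℝ≥0∞) (P : DSym N → DSym N → ℝ≥0∞) : Prop :=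
  (∀ s : DSym N, p s = p (s.1, !s.2)) ∧
  (∀ s t : DSym N, P s t = P (s.1, !s.2) (t.1, !t.2))

/-- Compatibility of the transition matrix with the admissibility matrix `A`. -/
def CompatA {N : ℕ} (part : Fin N → Bool) (P : DSym N → DSym N → ℝ≥0∞) : Prop :=
  ∀ s t : DSym N, t.2 ≠ xor s.2 (!(part s.1)) → P s t = 0

/-- Projection of doubled sequences to `Σ_N`. -/
def projSeq {N : ℕ} (ω : ℤ → DSym N) : BSeq N := fun n => (ω n).1

/-- The mirror involution on `Σ_A`, swapping `i ↔ i+N` in each coordinate. -/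
def mirrorA {N : ℕ} {part : Fin N → Bool} (ω : SigmaA N part) : SigmaA N part :=
  ⟨fun n => ((ω.1 n).1, !(ω.1 n).2), by
    intro n
    show (!(ω.1 (n + 1)).2) = xor (!(ω.1 n).2) (!(part (ω.1 n).1))
    rw [ω.2 n]
    cases (ω.1 n).2 <;> cases part (ω.1 n).1 <;> rfl⟩

/-- The fiber fslice of a set over a base point. -/
def fslice {β : Type*} (B : Set (β × ℝ)) (ω : β) : Set ℝ := {x | (ω, x) ∈ B}

/-- A bony graph relative to a measure `lam`: every fslice is a nonempty interval, and
`lam`-almost every fslice is a single point. -/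
def IsBony {β : Type*} [MeasurableSpace β] (lam : Measure β) (B : Set (β × ℝ)) : Prop :=
  (∀ ω, (fslice B ω).Nonempty ∧ (fslice B ω).OrdConnected) ∧
  lam {ω | ¬ ∃ x : ℝ, fslice B ω = {x}} = 0

/-- Continuity of a bony graph: fiber slices vary upper semicontinuously. -/
def ContBony {β : Type*} [TopologicalSpace β] (B : Set (β × ℝ)) : Prop :=
  ∀ ω : β, ∀ ε : ℝ, 0 < ε → ∃ U ∈ nhds ω, ∀ η ∈ U, ∀ y ∈ fslice B η,
    ∃ x ∈ fslice B ω, |y - x| < ε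

/-!
On `C_b = {ω | the bit of ω₀ is b}` the projection `π` is a bijection onto `Σ_N`, with
continuous inverse `liftA b`: admissibility forces the bit of `ω_n` to be `b` xor the parity of
the orientation-reversing symbols between `0` and `n`. Hence the slice of `Π(B ∩ C_b)` over `ξ`
is the slice of `B` over `liftA b ξ`, reflected by `R` when `b = true`, and the interval,
singleton and continuity properties carry over. For null sets, `π⁻¹(liftA b⁻¹ T) ⊆ T ∪ mirror⁻¹ T`,
and a symmetric Markov measure is mirror invariant, since it gives a cylinder and its mirror
image the same mass and finite measures on `ℤ → α` are determined by their cylinder masses.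
-/

open Function

section FlipParity

def flipParityNat (c : ℕ → Bool) : ℕ → Bool
  | 0 => false
  | k + 1 => xor (flipParityNat c k) (c k)

/-- The xor of `c i` over `0 ≤ i < n` if `n ≥ 0`, and over `n ≤ i < 0` if `n < 0`. -/
def flipParity (c : ℤ → Bool) : ℤ → Bool
  | Int.ofNat k => flipParityNat (fun i => c i) k
  | Int.negSucc k => flipParityNat (fun i => c (Int.negSucc i)) (k + 1)

variable (c : ℤ → Bool)

@[simp] theorem flipParity_zero : flipParity c 0 = false := rfl

theorem flipParity_succ (n : ℤ) : flipParity c (n + 1) = xor (flipParity c n) (c n) := by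
  match n with
  | Int.ofNat k => rfl
  | Int.negSucc 0 =>
    show false = xor (xor false _) _
    rw [Bool.false_xor, Bool.xor_self]
  | Int.negSucc (k + 1) =>
    show flipParityNat _ (k + 1) = xor (xor (flipParityNat _ (k + 1)) _) _
    rw [Bool.xor_assoc, Bool.xor_self, Bool.xor_false]

theorem flipParity_sub_one (n : ℤ) :
    flipParity c (n - 1) = xor (flipParity c n) (c (n - 1)) := by
  have h := flipParity_succ c (n - 1)
  rw [sub_add_cancel] at h
  rw [h, Bool.xor_assoc, Bool.xor_self, Bool.xor_false]

theorem eq_xor_flipParity {s : ℤ → Bool} (hs : ∀ n, s (n + 1) = xor (s n) (c n)) (n : ℤ) :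
    s n = xor (s 0) (flipParity c n) := by
  induction n using Int.induction_on with
  | zero => rw [flipParity_zero, Bool.xor_false]
  | succ k ih => rw [hs, flipParity_succ, ih, Bool.xor_assoc]
  | pred k ih =>
    have h := hs (-k - 1)
    rw [sub_add_cancel] at h
    rw [flipParity_sub_one, ← Bool.xor_assoc, ← ih, h, Bool.xor_assoc, Bool.xor_self,
      Bool.xor_false]

theorem continuous_flipParity (n : ℤ) : Continuous fun c : ℤ → Bool => flipParity c n := by
  induction n using Int.induction_on with
  | zero => simpa only [flipParity_zero] using continuous_const
  | succ k ih =>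
    simp_rw [flipParity_succ]
    exact (continuous_of_discreteTopology (f := fun p : Bool × Bool => xor p.1 p.2)).comp
      (ih.prodMk (continuous_apply _))
  | pred k ih =>
    simp_rw [flipParity_sub_one]
    exact (continuous_of_discreteTopology (f := fun p : Bool × Bool => xor p.1 p.2)).comp
      (ih.prodMk (continuous_apply _))

end FlipParity

section Lift

variable {N : ℕ} {part : Fin N → Bool}

def liftA (part : Fin N → Bool) (b : Bool) (ξ : BSeq N) : SigmaA N part :=
  ⟨fun n => (ξ n, xor b (flipParity (fun i => !part (ξ i)) n)), fun n => by
    simp only [flipParity_succ, Bool.xor_assoc]⟩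

@[simp] theorem piA_liftA (b : Bool) (ξ : BSeq N) : piA (liftA part b ξ) = ξ := rfl

@[simp] theorem liftA_bit (b : Bool) (ξ : BSeq N) : ((liftA part b ξ).1 0).2 = b :=
  Bool.xor_false b

theorem liftA_piA (ω : SigmaA N part) : liftA part (ω.1 0).2 (piA ω) = ω :=
  Subtype.ext <| funext fun n =>
    Prod.ext rfl (eq_xor_flipParity _ (s := fun n => (ω.1 n).2) ω.2 n).symm

theorem liftA_piA_of_bit {ω : SigmaA N part} {b : Bool} (h : (ω.1 0).2 = b) :
    liftA part b (piA ω) = ω :=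
  h ▸ liftA_piA ω

theorem continuous_liftA (b : Bool) : Continuous (liftA part b) := by
  refine Continuous.subtype_mk (continuous_pi fun n => (continuous_apply n).prodMk ?_) _
  exact (continuous_of_discreteTopology (f := fun x : Bool => xor b x)).comp <|
    (continuous_flipParity n).comp <| continuous_pi fun i =>
      (continuous_of_discreteTopology (f := fun a : Fin N => !part a)).comp (continuous_apply i)

theorem continuous_piA : Continuous (piA (N := N) (part := part)) :=
  continuous_pi fun n => continuous_fst.comp <| (continuous_apply n).comp continuous_subtype_val

theorem continuous_mirrorA : Continuous (mirrorA (N := N) (part := part)) :=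
  Continuous.subtype_mk (continuous_pi fun n =>
    (continuous_of_discreteTopology (f := fun s : DSym N => (s.1, !s.2))).comp <|
      (continuous_apply n).comp continuous_subtype_val) _

theorem preimage_piA_preimage_liftA_subset (b : Bool) (T : Set (SigmaA N part)) :
    piA ⁻¹' (liftA part b ⁻¹' T) ⊆ T ∪ mirrorA ⁻¹' T := by
  intro ω hω
  by_cases h : (ω.1 0).2 = b
  · exact Or.inl (liftA_piA_of_bit h ▸ hω)
  · have hmir : ((mirrorA ω).1 0).2 = b := by
      simpa [mirrorA, Bool.eq_not_iff] using h
    have hω' : liftA part b (piA (mirrorA ω)) ∈ T := hω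
    rw [liftA_piA_of_bit hmir] at hω'
    exact Or.inr hω'

theorem quasiMeasurePreserving_liftA {lam : Measure (SigmaA N part)}
    (hmir : Measure.QuasiMeasurePreserving mirrorA lam lam) (b : Bool) :
    Measure.QuasiMeasurePreserving (liftA part b) (lam.map piA) lam := by
  refine ⟨(continuous_liftA b).measurable, Measure.AbsolutelyContinuous.mk fun T hT hnull => ?_⟩
  rw [Measure.map_apply (continuous_liftA b).measurable hT,
    Measure.map_apply continuous_piA.measurable ((continuous_liftA b).measurable hT)]
  exact measure_mono_null (preimage_piA_preimage_liftA_subset b T)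
    (measure_union_null hnull (hmir.preimage_null hnull))

end Lift

section Cylinder

variable {α : Type*}

def window (m : ℤ) (k : ℕ) (η : ℤ → α) : Fin (k + 1) → α := fun i => η (m + (i : ℕ))

theorem measurable_window [MeasurableSpace α] (m : ℤ) (k : ℕ) :
    Measurable (window (α := α) m k) :=
  measurable_pi_lambda _ fun _ => measurable_pi_apply _

theorem cylinder_eq_preimage_window (m : ℤ) (k : ℕ) (w : ℕ → α) :
    cylinder m k w = window m k ⁻¹' {fun i : Fin (k + 1) => w i} := by
  ext η
  simp only [_root_.cylinder, mem_preimage, mem_singleton_iff, funext_iff, window,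
    Fin.forall_iff, Nat.lt_succ_iff]
  rfl

theorem exists_restrict_eq_comp_window (I : Finset ℤ) :
    ∃ (m : ℤ) (k : ℕ) (g : (Fin (k + 1) → α) → (I → α)), I.restrict = g ∘ window m k := by
  set n := I.sup Int.natAbs
  have hI : ∀ j ∈ I, j.natAbs ≤ n := fun j hj => Finset.le_sup (f := Int.natAbs) hj
  refine ⟨-n, 2 * n, fun v j => v ⟨((j : ℤ) + n).toNat, ?_⟩, funext fun η => funext fun j => ?_⟩
  · have := hI j j.2
    omega
  · have := hI j j.2
    simp only [Finset.restrict, comp_apply, window]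
    congr 1
    omega

theorem measure_eq_of_cylinder_eq [MeasurableSpace α] [Finite α] [MeasurableSingletonClass α]
    {ν₁ ν₂ : Measure (ℤ → α)} [IsFiniteMeasure ν₁] [IsFiniteMeasure ν₂]
    (h : ∀ m k w, ν₁ (cylinder m k w) = ν₂ (cylinder m k w)) : ν₁ = ν₂ := by
  have hwindow : ∀ m k, ν₁.map (window m k) = ν₂.map (window m k) := fun m k =>
    Measure.ext_iff_singleton.2 fun v => by
      obtain ⟨w, rfl⟩ : ∃ w : ℕ → α, v = fun i : Fin (k + 1) => w i :=
        ⟨fun j => if h : j < k + 1 then v ⟨j, h⟩ else v 0, funext fun i => by simp [i.2]⟩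
      rw [Measure.map_apply (measurable_window m k) (measurableSet_singleton _),
        Measure.map_apply (measurable_window m k) (measurableSet_singleton _),
        ← cylinder_eq_preimage_window, h]
  refine IsProjectiveLimit.unique (P := fun I => ν₂.map I.restrict) (fun I => ?_) fun I => rfl
  obtain ⟨m, k, g, hg⟩ := exists_restrict_eq_comp_window (α := α) I
  show ν₁.map I.restrict = ν₂.map I.restrict
  rw [hg, ← Measure.map_map .of_discrete (measurable_window m k), hwindow,
    Measure.map_map .of_discrete (measurable_window m k)]

theorem IsMarkov.map_comp_eq [MeasurableSpace α] [Finite α] [MeasurableSingletonClass α]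
    {μ : Measure (ℤ → α)} [IsFiniteMeasure μ] {p : α → ℝ≥0∞}
    {P : α → α → ℝ≥0∞} (hμ : IsMarkov μ p P) (σ : α ≃ α) (hp : ∀ a, p (σ a) = p a)
    (hP : ∀ a b, P (σ a) (σ b) = P a b) : μ.map (σ ∘ ·) = μ := by
  have hσ : Measurable (σ ∘ · : (ℤ → α) → ℤ → α) :=
    measurable_pi_lambda _ fun n => Measurable.of_discrete.comp (measurable_pi_apply n)
  refine measure_eq_of_cylinder_eq fun m k w => ?_
  have hpre : (σ ∘ ·) ⁻¹' cylinder m k w = cylinder m k (σ.symm ∘ w) := by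
    ext η
    simp only [mem_preimage, _root_.cylinder, comp_apply, Equiv.eq_symm_apply]
    rfl
  have hcyl : MeasurableSet (cylinder m k w) := by
    rw [cylinder_eq_preimage_window]
    exact measurable_window m k (measurableSet_singleton _)
  rw [Measure.map_apply hσ hcyl, hpre, hμ, hμ, comp_apply, ← hp, Equiv.apply_symm_apply]
  exact congrArg _ (Finset.prod_congr rfl fun i _ => by
    rw [← hP, comp_apply, comp_apply, Equiv.apply_symm_apply, Equiv.apply_symm_apply])

end Cylinder

section Mirror

variable {N : ℕ} {part : Fin N → Bool}

def mirrorSym (N : ℕ) : DSym N ≃ DSym N := (Equiv.refl (Fin N)).prodCongr Equiv.boolNot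

theorem isClosed_setOf_admissible (part : Fin N → Bool) :
    IsClosed {ω : ℤ → DSym N | Admissible part ω} := by
  simp only [Admissible, ofPred_forall]
  exact isClosed_iInter fun n => isClosed_eq (continuous_snd.comp (continuous_apply _))
    ((continuous_of_discreteTopology (f := fun s : DSym N => xor s.2 (!part s.1))).comp
      (continuous_apply n))

theorem measurePreserving_mirrorA {lam : Measure (SigmaA N part)} [IsFiniteMeasure lam]
    {p : DSym N → ℝ≥0∞} {P : DSym N → DSym N → ℝ≥0∞}
    (hMarkov : IsMarkov (lam.map Subtype.val) p P) (hsym : SymMarkov p P) :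
    MeasurePreserving mirrorA lam lam := by
  have hval : MeasurableEmbedding (Subtype.val : SigmaA N part → ℤ → DSym N) :=
    MeasurableEmbedding.subtype_coe (isClosed_setOf_admissible part).measurableSet
  have hmir := (continuous_mirrorA (part := part)).measurable
  have hσ : Measurable (mirrorSym N ∘ · : (ℤ → DSym N) → ℤ → DSym N) :=
    measurable_pi_lambda _ fun n => Measurable.of_discrete.comp (measurable_pi_apply n)
  have hmap : (lam.map mirrorA).map Subtype.val = lam.map Subtype.val := by
    rw [Measure.map_map hval.measurable hmir,
      show Subtype.val ∘ mirrorA = (mirrorSym N ∘ ·) ∘ Subtype.val from rfl,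
      ← Measure.map_map hσ hval.measurable]
    exact hMarkov.map_comp_eq (mirrorSym N) (fun s => (hsym.1 s).symm)
      fun s t => (hsym.2 s t).symm
  refine ⟨hmir, ?_⟩
  rw [← hval.comap_map (lam.map mirrorA), hmap, hval.comap_map]

end Mirror

section Bony

theorem IsBony.of_fslice_eq_image {β β' : Type*} [MeasurableSpace β] [MeasurableSpace β']
    {μ : Measure β} {ν : Measure β'} {B : Set (β × ℝ)} {B' : Set (β' × ℝ)} (hB : IsBony μ B)
    {g : β' → β} (hg : Measure.QuasiMeasurePreserving g ν μ) {φ : ℝ → ℝ} (hφc : Continuous φ)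
    (hφi : Injective φ) (h : ∀ ξ, fslice B' ξ = φ '' fslice B (g ξ)) : IsBony ν B' := by
  refine ⟨fun ξ => ?_, ?_⟩
  · obtain ⟨hne, hconn⟩ := hB.1 (g ξ)
    rw [h]
    exact ⟨hne.image φ, isPreconnected_iff_ordConnected.1
      ((isPreconnected_iff_ordConnected.2 hconn).image φ hφc.continuousOn)⟩
  · have hbad : {ξ | ¬∃ x, fslice B' ξ = {x}} = g ⁻¹' {ω | ¬∃ x, fslice B ω = {x}} := by
      ext ξ
      simp only [mem_ofPred_eq, mem_preimage, h, exists_eq_singleton_iff_nonempty_subsingleton,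
        image_nonempty, hφi.subsingleton_image_iff]
    rw [hbad]
    exact hg.preimage_null hB.2

theorem ContBony.of_fslice_eq_image {β β' : Type*} [TopologicalSpace β] [TopologicalSpace β']
    {B : Set (β × ℝ)} {B' : Set (β' × ℝ)} (hB : ContBony B) {g : β' → β} (hg : Continuous g)
    {φ : ℝ → ℝ} (hφ : LipschitzWith 1 φ) (h : ∀ ξ, fslice B' ξ = φ '' fslice B (g ξ)) :
    ContBony B' := by
  intro ξ ε hε
  obtain ⟨U, hU, hUB⟩ := hB (g ξ) ε hε
  refine ⟨g ⁻¹' U, hg.continuousAt.preimage_mem_nhds hU, fun η hη y hy => ?_⟩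
  rw [h] at hy
  obtain ⟨y, hy, rfl⟩ := hy
  obtain ⟨x, hx, hxy⟩ := hUB (g η) hη y hy
  refine ⟨φ x, h ξ ▸ mem_image_of_mem φ hx, ?_⟩
  calc |φ y - φ x| = dist (φ y) (φ x) := (Real.dist_eq _ _).symm
    _ ≤ dist y x := by simpa using hφ.dist_le_mul y x
    _ < ε := by rwa [Real.dist_eq]

theorem ContBony.union {β : Type*} [TopologicalSpace β] {B₁ B₂ : Set (β × ℝ)}
    (h₁ : ContBony B₁) (h₂ : ContBony B₂) : ContBony (B₁ ∪ B₂) := by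
  intro ω ε hε
  obtain ⟨U₁, hU₁, h₁⟩ := h₁ ω ε hε
  obtain ⟨U₂, hU₂, h₂⟩ := h₂ ω ε hε
  refine ⟨U₁ ∩ U₂, inter_mem hU₁ hU₂, fun η hη y hy => ?_⟩
  rcases hy with hy | hy
  · obtain ⟨x, hx, hxy⟩ := h₁ η hη.1 y hy
    exact ⟨x, Or.inl hx, hxy⟩
  · obtain ⟨x, hx, hxy⟩ := h₂ η hη.2 y hy
    exact ⟨x, Or.inr hx, hxy⟩

end Bony

section Projection

variable {N : ℕ} {part : Fin N → Bool}

def reflectIf (b : Bool) (x : ℝ) : ℝ := if b then R x else x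

theorem isometry_reflectIf (b : Bool) : Isometry (reflectIf b) := by
  cases b
  · exact isometry_id
  · exact Isometry.of_dist_eq fun x y => by
      simp only [reflectIf, R, if_true, Real.dist_eq]
      rw [abs_sub_comm]
      ring_nf

theorem fslice_image_PiMap_inter (B : Set (SigmaA N part × ℝ)) (b : Bool) (ξ : BSeq N) :
    fslice (PiMap '' (B ∩ {z | (z.1.1 0).2 = b})) ξ =
      reflectIf b '' fslice B (liftA part b ξ) := by
  ext x
  constructor
  · rintro ⟨⟨ω, y⟩, ⟨hB, hb : (ω.1 0).2 = b⟩, hz⟩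
    obtain ⟨rfl, rfl⟩ := Prod.mk.inj hz
    refine ⟨y, ?_, by rw [← hb]; rfl⟩
    show (liftA part b (piA ω), y) ∈ B
    rwa [liftA_piA_of_bit hb]
  · rintro ⟨y, hy, rfl⟩
    refine ⟨(liftA part b ξ, y), ⟨hy, liftA_bit b ξ⟩, ?_⟩
    simp only [PiMap, piA_liftA, liftA_bit, reflectIf]

theorem image_PiMap_eq_union (B : Set (SigmaA N part × ℝ)) :
    PiMap '' B =
      PiMap '' (B ∩ {z | (z.1.1 0).2 = false}) ∪ PiMap '' (B ∩ {z | (z.1.1 0).2 = true}) := by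
  have hbits : {z : SigmaA N part × ℝ | (z.1.1 0).2 = false} ∪ {z | (z.1.1 0).2 = true} = univ :=
    eq_univ_of_forall fun z => (z.1.1 0).2.eq_false_or_eq_true.symm
  rw [← image_union, ← inter_union_distrib_left, hbits, inter_univ]

end Projection

theorem bony_graph_projects_general {N : ℕ}
    (part : Fin N → Bool)
    (lam : Measure (SigmaA N part)) [IsProbabilityMeasure lam]
    (p : DSym N → ℝ≥0∞) (P : DSym N → DSym N → ℝ≥0∞)
    (hMarkov : IsMarkov (lam.map (Subtype.val)) p P)
    (hsym : SymMarkov p P)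
    (B : Set (SigmaA N part × ℝ))
    (hB : IsBony lam B) :
    IsBony (lam.map (piA (N := N) (part := part)))
        (PiMap (N := N) (part := part) '' (B ∩ {z | (z.1.1 0).2 = false})) ∧
    IsBony (lam.map (piA (N := N) (part := part)))
        (PiMap (N := N) (part := part) '' (B ∩ {z | (z.1.1 0).2 = true})) ∧
    PiMap (N := N) (part := part) '' B =
      PiMap (N := N) (part := part) '' (B ∩ {z | (z.1.1 0).2 = false}) ∪
      PiMap (N := N) (part := part) '' (B ∩ {z | (z.1.1 0).2 = true}) ∧
    (ContBony B → ContBony (PiMap (N := N) (part := part) '' B)) := by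
  have hmir := (measurePreserving_mirrorA hMarkov hsym).quasiMeasurePreserving
  have hbony : ∀ b, IsBony (lam.map piA) (PiMap '' (B ∩ {z | (z.1.1 0).2 = b})) := fun b =>
    hB.of_fslice_eq_image (quasiMeasurePreserving_liftA hmir b) (isometry_reflectIf b).continuous
      (isometry_reflectIf b).injective (fslice_image_PiMap_inter B b)
  refine ⟨hbony false, hbony true, image_PiMap_eq_union B, fun hcont => ?_⟩
  have hcont' : ∀ b, ContBony (PiMap '' (B ∩ {z | (z.1.1 0).2 = b})) := fun b =>
    hcont.of_fslice_eq_image (continuous_liftA b) (isometry_reflectIf b).lipschitz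
      (fslice_image_PiMap_inter B b)
  rw [image_PiMap_eq_union B]
  exact (hcont' false).union (hcont' true)

/-- **Lemma (projection of bony graphs).** If `B` is a (continuous) bony graph relative
to a symmetric Markov measure `lam` on `Σ_A`, then `Π(B)` is a (continuous) bi-bony
graph relative to `π_* lam`. -/
theorem bony_graph_projects {N : ℕ} (f : Fin N → ℝ → ℝ)
    (part : Fin N → Bool) (hor : OrientPart f part)
    (lam : Measure (SigmaA N part)) [IsProbabilityMeasure lam]
    (p : DSym N → ℝ≥0∞) (P : DSym N → DSym N → ℝ≥0∞)
    (hMarkov : IsMarkov (lam.map (Subtype.val)) p P)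
    (hstoch : IsStochastic p P) (hcompat : CompatA part P) (hsym : SymMarkov p P)
    (B : Set (SigmaA N part × ℝ))
    (hB : IsBony lam B) :
    IsBony (lam.map (piA (N := N) (part := part)))
        (PiMap (N := N) (part := part) '' (B ∩ {z | (z.1.1 0).2 = false})) ∧
    IsBony (lam.map (piA (N := N) (part := part)))
        (PiMap (N := N) (part := part) '' (B ∩ {z | (z.1.1 0).2 = true})) ∧
    PiMap (N := N) (part := part) '' B =
      PiMap (N := N) (part := part) '' (B ∩ {z | (z.1.1 0).2 = false}) ∪
      PiMap (N := N) (part := part) '' (B ∩ {z | (z.1.1 0).2 = true}) ∧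
    (ContBony B → ContBony (PiMap (N := N) (part := part) '' B)) :=
  bony_graph_projects_general part lam p P hMarkov hsym B hB
end
end

section
/- (Uniqueness of the ergodic lift over a bi-strip) Let $S_0=\Pi(S)$ be an attracting bi-strip for $F$ with $S$ an attracting strip for $G$, suppose $S\cap S'=\emptyset$ where $S'$ is the mirrored strip, so that $\Pi|_S:S\to S_0$ and $\Pi|_{S'}:S'\to S_0$ are bijective conjugations, and let $\mu$ be the unique ergodic $G$-invariant measure on $S$ projecting to the symmetric Markov extension $\lambda$ of a Markov measure $\lambda_0$. Then $\Pi_*\mu$ is the unique ergodic $F$-invariant measure supported in $S_0$ whose base projection is $\lambda_0$. -/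
open Set Filter MeasureTheory Topology

noncomputable section

open scoped ENNReal

/-- The mirror involution `τ` on `Σ_A × I`. -/
def tauMap {N : ℕ} {part : Fin N → Bool} (z : SigmaA N part × ℝ) : SigmaA N part × ℝ :=
  (mirrorA z.1, R z.2)

/-- Base projection `Σ_A × I → Σ_{2N}`. -/
def baseA {N : ℕ} {part : Fin N → Bool} (z : SigmaA N part × ℝ) : ℤ → DSym N := z.1.1

/-- The strip between the graphs of `φ` and `ψ`. -/
def strip {β : Type*} (φ ψ : β → ℝ) : Set (β × ℝ) :=
  {z | φ z.1 ≤ z.2 ∧ z.2 ≤ ψ z.1}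

/-!
`Π` is injective on `S` and `G` maps `S` into its interior, so an `F`-ergodic measure `ν` carried
by `Π(S)` lifts, through a measurable section of `Π` that takes values in `interior S`, to a
`G`-ergodic measure `μ₁` carried by `S` with `Π_*μ₁ = ν`. The base projection `κ` of `μ₁` is
shift invariant, and `κ + mirror_*κ` only depends on the projection `λ₀` of `κ` to `Σ_N`; hence it
equals `λ + mirror_*λ = 2λ`, the symmetric Markov measure `λ` being mirror invariant. Thus
`κ ≪ λ`, ergodicity of `λ` forces `κ = λ`, and the uniqueness of `μ` gives `μ₁ = μ`.
-/

theorem measurableSet_cylinder {α : Type*} [MeasurableSpace α] [MeasurableSingletonClass α]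
    (m : ℤ) (k : ℕ) (w : ℕ → α) : MeasurableSet (_root_.cylinder m k w) := by
  simp only [_root_.cylinder, Set.ofPred_forall]
  exact .iInter fun i => .iInter fun _ =>
    (measurableSet_singleton (w i)).preimage (measurable_pi_apply (m + i))

theorem MeasureTheory.Measure.ext_of_cylinder {α : Type*} [MeasurableSpace α]
    [MeasurableSingletonClass α] [Finite α] {μ ν : Measure (ℤ → α)} [IsFiniteMeasure μ]
    (h : ∀ m k w, μ (_root_.cylinder m k w) = ν (_root_.cylinder m k w)) : μ = ν := by
  -- A measurable cylinder only depends on the coordinates in some `[-n, n]`, so it is a finite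
  -- disjoint union of fibres of the restriction to `[-n, n]`, which are interval cylinders.
  have hcyl : ∀ t ∈ measurableCylinders (fun _ : ℤ => α), μ t = ν t := by
    intro t ht
    obtain ⟨s, S, -, rfl⟩ := (mem_measurableCylinders t).1 ht
    set n := s.sup Int.natAbs
    set r : (ℤ → α) → (Finset.Icc (-(n : ℤ)) n → α) := (Finset.Icc (-(n : ℤ)) n).restrict
    have hs : ∀ i ∈ s, i ∈ Finset.Icc (-(n : ℤ)) n := fun i hi => by
      have := Finset.le_sup (f := Int.natAbs) hi
      rw [Finset.mem_Icc]; omega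
    have hsat : MeasureTheory.cylinder s S = r ⁻¹' (r '' MeasureTheory.cylinder s S) := by
      refine (Set.subset_preimage_image _ _).antisymm ?_
      rintro η ⟨η', hη', hr⟩
      have hrestr : s.restrict η = s.restrict η' :=
        funext fun i => (congrFun hr ⟨i.1, hs i.1 i.2⟩).symm
      exact (show s.restrict η ∈ S from hrestr ▸ hη')
    have hfib : ∀ η, r ⁻¹' {r η} = _root_.cylinder (-n) (2 * n) (fun i => η (-n + i)) := by
      intro η
      ext η'
      simp only [Set.mem_preimage, Set.mem_singleton_iff, _root_.cylinder, Set.mem_ofPred_eq, r,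
        funext_iff, Finset.restrict, Subtype.forall, Finset.mem_Icc]
      refine ⟨fun h' i hi => h' _ (by omega), fun h' j hj => ?_⟩
      have hj' := h' (j + n).toNat (by omega)
      rwa [show -(n : ℤ) + ((j + n).toNat : ℕ) = j by omega] at hj'
    have hmeas : ∀ g, MeasurableSet (r ⁻¹' {g}) := fun g =>
      (Finset.measurable_restrict _) (measurableSet_singleton g)
    rw [hsat, ← Set.biUnion_preimage_singleton,
      measure_biUnion (Set.toFinite _).countable (Set.pairwiseDisjoint_fiber _ _)
        fun g _ => hmeas g,
      measure_biUnion (Set.toFinite _).countable (Set.pairwiseDisjoint_fiber _ _)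
        fun g _ => hmeas g]
    refine tsum_congr fun ⟨g, hg⟩ => ?_
    obtain ⟨η, -, rfl⟩ := hg
    rw [hfib]
    exact h _ _ _
  exact ext_of_generate_finite _ generateFrom_measurableCylinders.symm
    isPiSystem_measurableCylinders hcyl (hcyl _ (univ_mem_measurableCylinders _))

section ErgodicLift

variable {X Y : Type*} [MeasurableSpace Y]

theorem Ergodic.map_of_ae_semiconj [MeasurableSpace X] {f : X → X} {g : Y → Y} {π : X → Y}
    {μ : Measure X} (hf : Ergodic f μ) (hπ : Measurable π) (hg : Measurable g)
    (hsemi : π ∘ f =ᵐ[μ] g ∘ π) : Ergodic g (μ.map π) := by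
  refine ⟨⟨hg, ?_⟩, ⟨fun s hs hinv => ?_⟩⟩
  · rw [Measure.map_map hg hπ, ← Measure.map_congr hsemi, ← Measure.map_map hπ hf.measurable,
      hf.map_eq]
  · rw [← (MeasurePreserving.mk hπ rfl : MeasurePreserving π μ (μ.map π)).aeconst_preimage
      hs.nullMeasurableSet]
    refine hf.quasiErgodic.aeconst_set₀ (hπ hs).nullMeasurableSet ?_
    filter_upwards [hsemi] with x hx
    change (π (f x) ∈ s) = (π x ∈ s)
    rw [show π (f x) = g (π x) from hx, ← Set.mem_preimage, hinv]

variable {T : X → X} {F : Y → Y} {π : X → Y} {j : Y → X} {S U : Set X} {ν : Measure Y}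

theorem ae_section_mem (hF : MeasurePreserving F ν ν) (hπT : Function.Semiconj π T F)
    (hTS : MapsTo T S U) (hjU : ∀ x ∈ U, j (π x) ∈ U) (hU : MeasurableSet (j ⁻¹' U))
    (hν : ν (π '' S)ᶜ = 0) : ∀ᵐ y ∂ν, j y ∈ U := by
  have hjFU : ∀ᵐ y ∂ν, j (F y) ∈ U := by
    filter_upwards [ae_iff.2 hν] with y hy
    obtain ⟨x, hx, rfl⟩ := hy
    rw [← hπT x]
    exact hjU _ (hTS hx)
  simpa only [hF.map_eq] using (ae_map_iff hF.aemeasurable hU).2 hjFU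

theorem ae_semiconj_section (hjπ : Function.LeftInverse π j) (hπT : Function.Semiconj π T F)
    (hTS : MapsTo T S U) (hUS : U ⊆ S) (hinj : InjOn π S)
    (hF : Measure.QuasiMeasurePreserving F ν ν) (hjU : ∀ᵐ y ∂ν, j y ∈ U) : j ∘ F =ᵐ[ν] T ∘ j := by
  filter_upwards [hjU, hF.ae hjU] with y hy hFy
  refine hinj (hUS hFy) (hUS (hTS (hUS hy))) ?_
  simp only [Function.comp_apply, hπT (j y), hjπ y, hjπ (F y)]

end ErgodicLift

section Lifts

variable {N : ℕ} {part : Fin N → Bool}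

/-- The bit at `n` of the admissible lift of `ξ` whose bit at `0` is `false`. -/
def liftBit (part : Fin N → Bool) (ξ : BSeq N) : ℤ → Bool
  | Int.ofNat 0 => false
  | Int.ofNat (m + 1) => xor (liftBit part ξ m) (!part (ξ m))
  | Int.negSucc m => xor (liftBit part ξ (-m)) (!part (ξ (Int.negSucc m)))
termination_by n => n.natAbs
decreasing_by all_goals simp <;> omega

theorem liftBit_zero (ξ : BSeq N) : liftBit part ξ 0 = false := liftBit.eq_1 ..

theorem liftBit_add_one (ξ : BSeq N) (n : ℤ) :
    liftBit part ξ (n + 1) = xor (liftBit part ξ n) (!part (ξ n)) := by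
  rcases n with m | m
  · exact liftBit.eq_2 ..
  · rw [show Int.negSucc m + 1 = -m by omega, liftBit.eq_3, Bool.xor_assoc, Bool.xor_self,
      Bool.xor_false]

def liftSeq (part : Fin N → Bool) (ξ : BSeq N) (b : Bool) : SigmaA N part :=
  ⟨fun n => (ξ n, xor b (liftBit part ξ n)), fun n => by
    simp only [liftBit_add_one, Bool.xor_assoc]⟩

theorem SigmaA.ext_of_piA {ω ω' : SigmaA N part} (h : piA ω = piA ω')
    (h0 : (ω.1 0).2 = (ω'.1 0).2) : ω = ω' := by
  have hper : Function.Periodic (fun n => xor (ω.1 n).2 (ω'.1 n).2) 1 := fun n => by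
    simp only [ω.2 n, ω'.2 n, show (ω.1 n).1 = (ω'.1 n).1 from congrFun h n]
    cases (ω.1 n).2 <;> cases (ω'.1 n).2 <;> cases part (ω'.1 n).1 <;> rfl
  refine Subtype.ext (funext fun n => Prod.ext (congrFun h n) ?_)
  simpa [h0] using hper.int_mul_eq n

@[simp]
theorem piA_liftSeq (ξ : BSeq N) (b : Bool) : piA (liftSeq part ξ b) = ξ := rfl

@[simp]
theorem liftSeq_symbol (ξ : BSeq N) (b : Bool) (n : ℤ) : ((liftSeq part ξ b).1 n).1 = ξ n := rfl

@[simp]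
theorem liftSeq_bit_zero (ξ : BSeq N) (b : Bool) : ((liftSeq part ξ b).1 0).2 = b := by
  simp [liftSeq, liftBit_zero]

theorem liftSeq_piA (ω : SigmaA N part) : liftSeq part (piA ω) (ω.1 0).2 = ω :=
  SigmaA.ext_of_piA rfl (liftSeq_bit_zero ..)

theorem shiftA_liftSeq (ξ : BSeq N) (b : Bool) :
    shiftA (liftSeq part ξ b) = liftSeq part (shiftSeq ξ) (xor b (!part (ξ 0))) :=
  SigmaA.ext_of_piA rfl (by simpa [shiftA, shiftSeq] using (liftSeq part ξ b).2 0)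

theorem mirrorA_liftSeq (ξ : BSeq N) (b : Bool) :
    mirrorA (liftSeq part ξ b) = liftSeq part ξ (!b) :=
  SigmaA.ext_of_piA rfl (by simp [mirrorA])

def piLift (part : Fin N → Bool) (b : Bool) (q : BSeq N × ℝ) : SigmaA N part × ℝ :=
  (liftSeq part q.1 b, if b then R q.2 else q.2)

theorem R_R (x : ℝ) : R (R x) = x := by simp [R]

@[simp]
theorem PiMap_piLift (b : Bool) (q : BSeq N × ℝ) : PiMap (piLift part b q) = q := by
  cases b <;> simp [PiMap, piLift, R_R]

theorem piLift_PiMap (z : SigmaA N part × ℝ) : piLift part (z.1.1 0).2 (PiMap z) = z := by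
  refine Prod.ext (liftSeq_piA z.1) ?_
  cases h : (z.1.1 0).2 <;> simp [PiMap, piLift, h, R_R]

theorem Gmap_piLift (f : Fin N → ℝ → ℝ) (b : Bool) (q : BSeq N × ℝ) :
    Gmap f (piLift part b q) = piLift part (xor b (!part (q.1 0))) (Fmap f q) := by
  refine Prod.ext (shiftA_liftSeq q.1 b) ?_
  cases b <;> cases h : part (q.1 0) <;> simp [Gmap, gmap, Fmap, piLift, h, R_R]

theorem PiMap_Gmap (f : Fin N → ℝ → ℝ) (z : SigmaA N part × ℝ) :
    PiMap (Gmap f z) = Fmap f (PiMap z) := by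
  conv_lhs => rw [← piLift_PiMap z, Gmap_piLift, PiMap_piLift]

def mirrorSeq (η : ℤ → DSym N) : ℤ → DSym N := fun n => ((η n).1, !(η n).2)

theorem measurable_liftBit (n : ℤ) : Measurable fun ξ : BSeq N => liftBit part ξ n := by
  have step : ∀ (g : BSeq N → Bool) (k : ℤ), Measurable g →
      Measurable fun ξ : BSeq N => xor (g ξ) (!part (ξ k)) := fun g k hg =>
    (measurable_of_countable fun p : Bool × Fin N => xor p.1 (!part p.2)).comp
      (hg.prodMk (measurable_pi_apply k))
  induction n using Int.induction_on with
  | zero => simp only [liftBit_zero]; exact measurable_const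
  | succ n ih => simpa only [liftBit_add_one] using step _ _ ih
  | pred n ih =>
    have h : ∀ ξ : BSeq N,
        liftBit part ξ (-n - 1) = xor (liftBit part ξ (-n)) (!part (ξ (-n - 1))) :=
      fun ξ => by rw [← sub_add_cancel (-(n : ℤ)) 1, liftBit_add_one]; simp
    simpa only [h] using step _ _ ih

@[fun_prop]
theorem measurable_liftSeq (b : Bool) : Measurable fun ξ : BSeq N => liftSeq part ξ b :=
  Measurable.subtype_mk <| measurable_pi_lambda _ fun n => (measurable_pi_apply n).prodMk
    ((measurable_of_countable (xor b)).comp (measurable_liftBit n))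

@[fun_prop]
theorem measurable_piA : Measurable (piA (N := N) (part := part)) :=
  measurable_pi_lambda _ fun n =>
    measurable_fst.comp ((measurable_pi_apply n).comp measurable_subtype_coe)

theorem measurable_baseA : Measurable (baseA (N := N) (part := part)) := by
  unfold baseA; fun_prop

theorem measurable_projSeq : Measurable (projSeq (N := N)) := by
  unfold projSeq; fun_prop

theorem measurable_mirrorSeq : Measurable (mirrorSeq (N := N)) := by
  unfold mirrorSeq; fun_prop

theorem measurable_shiftSeq {α : Type*} [MeasurableSpace α] : Measurable (shiftSeq (α := α)) := by
  unfold shiftSeq; fun_prop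

@[fun_prop]
theorem measurable_R : Measurable R := by unfold R; fun_prop

theorem measurable_piLift (b : Bool) : Measurable (piLift part b) :=
  ((measurable_liftSeq b).comp measurable_fst).prodMk (by cases b <;> simp <;> fun_prop)

theorem measurable_PiMap : Measurable (PiMap (N := N) (part := part)) := by
  have hbit : Measurable fun z : SigmaA N part × ℝ => (z.1.1 0).2 :=
    measurable_snd.comp ((measurable_pi_apply 0).comp (measurable_subtype_coe.comp measurable_fst))
  exact (measurable_piA.comp measurable_fst).prodMk
    (Measurable.ite (hbit (measurableSet_singleton true)) (by fun_prop) measurable_snd)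

theorem IsMarkov.map_mirrorSeq_eq {lam : Measure (ℤ → DSym N)} [IsFiniteMeasure lam]
    {p : DSym N → ℝ≥0∞} {P : DSym N → DSym N → ℝ≥0∞} (hlam : IsMarkov lam p P)
    (hsym : SymMarkov p P) : lam.map mirrorSeq = lam := by
  refine Measure.ext_of_cylinder fun m k w => ?_
  have hpre : mirrorSeq ⁻¹' _root_.cylinder m k w
      = _root_.cylinder m k (fun i => ((w i).1, !(w i).2)) := by
    ext η
    simp [_root_.cylinder, mirrorSeq, Prod.ext_iff]
  rw [Measure.map_apply measurable_mirrorSeq (measurableSet_cylinder ..), hpre, hlam, hlam,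
    ← hsym.1]
  congr 1
  exact Finset.prod_congr rfl fun i _ => (hsym.2 _ _).symm

theorem measurableSet_bit_zero_eq (b : Bool) :
    MeasurableSet {ω : SigmaA N part | (ω.1 0).2 = b} :=
  (measurable_snd.comp ((measurable_pi_apply 0).comp measurable_subtype_coe))
    (measurableSet_singleton b)

theorem map_val_add_map_mirrorSeq (ρ : Measure (SigmaA N part)) :
    ρ.map Subtype.val + (ρ.map Subtype.val).map mirrorSeq
      = (ρ.map piA).map (fun ξ => (liftSeq part ξ true).1)
        + (ρ.map piA).map (fun ξ => (liftSeq part ξ false).1) := by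
  set L : Bool → BSeq N → ℤ → DSym N := fun b ξ => (liftSeq part ξ b).1
  have hL : ∀ b, Measurable (L b) := fun b => measurable_subtype_coe.comp (measurable_liftSeq b)
  have hsheet : ∀ b, let ρb := ρ.restrict {ω | (ω.1 0).2 = b}
      ρb.map Subtype.val = (ρb.map piA).map (L b) ∧
        (ρb.map Subtype.val).map mirrorSeq = (ρb.map piA).map (L !b) := by
    intro b ρb
    have hmem : ∀ᵐ ω ∂ρb, (ω.1 0).2 = b := ae_restrict_mem (measurableSet_bit_zero_eq b)
    rw [Measure.map_map (hL b) measurable_piA, Measure.map_map (hL !b) measurable_piA,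
      Measure.map_map measurable_mirrorSeq measurable_subtype_coe]
    refine ⟨Measure.map_congr (hmem.mono fun ω hω => ?_),
      Measure.map_congr (hmem.mono fun ω hω => ?_)⟩
    · simp only [Function.comp_apply, L, ← hω, liftSeq_piA]
    · simp only [Function.comp_apply, L, ← hω, ← mirrorA_liftSeq, liftSeq_piA]
      rfl
  have hsplit :
      ρ = ρ.restrict {ω | (ω.1 0).2 = true} + ρ.restrict {ω | (ω.1 0).2 = false} := by
    simpa only [Set.compl_ofPred, Bool.not_eq_true] using
      (Measure.restrict_add_restrict_compl (μ := ρ) (measurableSet_bit_zero_eq true)).symm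
  obtain ⟨ht, ht'⟩ := hsheet true
  obtain ⟨hf, hf'⟩ := hsheet false
  rw [hsplit, Measure.map_add _ _ measurable_subtype_coe,
    Measure.map_add _ _ measurable_mirrorSeq, ht', hf', ht, hf, Measure.map_add _ _ measurable_piA,
    Measure.map_add _ _ (hL true), Measure.map_add _ _ (hL false), Bool.not_true, Bool.not_false]
  abel

theorem map_baseA_eq_of_map_PiMap_fst_eq {ρ σ : Measure (SigmaA N part × ℝ)}
    [IsProbabilityMeasure ρ] [IsProbabilityMeasure σ] (herg : Ergodic shiftSeq (σ.map baseA))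
    (hinv : MeasurePreserving shiftSeq (ρ.map baseA) (ρ.map baseA))
    (hsym : (σ.map baseA).map mirrorSeq = σ.map baseA)
    (h : (ρ.map PiMap).map Prod.fst = (σ.map PiMap).map Prod.fst) :
    ρ.map baseA = σ.map baseA := by
  have hbase : ∀ τ : Measure (SigmaA N part × ℝ),
      τ.map baseA = (τ.map Prod.fst).map Subtype.val := fun τ => by
    rw [Measure.map_map measurable_subtype_coe measurable_fst]
    rfl
  have hproj : ∀ τ : Measure (SigmaA N part × ℝ),
      (τ.map PiMap).map Prod.fst = (τ.map Prod.fst).map piA := fun τ => by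
    rw [Measure.map_map measurable_fst measurable_PiMap,
      Measure.map_map measurable_piA measurable_fst]
    rfl
  have hsum := map_val_add_map_mirrorSeq (ρ.map Prod.fst)
  rw [← hproj, h, hproj, ← map_val_add_map_mirrorSeq, ← hbase, ← hbase, hsym] at hsum
  have hac : ρ.map baseA ≪ σ.map baseA := by
    refine (Measure.AbsolutelyContinuous.rfl.add_right ((ρ.map baseA).map mirrorSeq)).trans ?_
    rw [hsum]
    exact Measure.AbsolutelyContinuous.add_left_iff.2 ⟨.rfl, .rfl⟩
  have := Measure.isProbabilityMeasure_map (μ := ρ) measurable_baseA.aemeasurable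
  have := Measure.isProbabilityMeasure_map (μ := σ) measurable_baseA.aemeasurable
  exact herg.eq_of_absolutelyContinuous hinv hac

theorem ergodic_map_baseA {f : Fin N → ℝ → ℝ} {μ : Measure (SigmaA N part × ℝ)}
    (h : Ergodic (Gmap f) μ) : Ergodic shiftSeq (μ.map baseA) :=
  MeasurePreserving.ergodic_of_ergodic_semiconj ⟨measurable_baseA, rfl⟩ h measurable_shiftSeq
    fun _ => rfl

open Classical in
def piSection (part : Fin N → Bool) (U : Set (SigmaA N part × ℝ)) (q : BSeq N × ℝ) :
    SigmaA N part × ℝ :=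
  if piLift part true q ∈ U then piLift part true q else piLift part false q

theorem PiMap_piSection (U : Set (SigmaA N part × ℝ)) (q : BSeq N × ℝ) :
    PiMap (piSection part U q) = q := by
  unfold piSection; split_ifs <;> simp

theorem piSection_PiMap_mem {U : Set (SigmaA N part × ℝ)} {z : SigmaA N part × ℝ} (hz : z ∈ U) :
    piSection part U (PiMap z) ∈ U := by
  rw [← piLift_PiMap z] at hz
  unfold piSection
  split_ifs with h
  · exact h
  · cases hb : (z.1.1 0).2 <;> rw [hb] at hz
    · exact hz
    · exact absurd hz h

theorem measurable_piSection {U : Set (SigmaA N part × ℝ)} (hU : MeasurableSet U) :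
    Measurable (piSection part U) :=
  Measurable.ite (measurable_piLift true hU) (measurable_piLift true) (measurable_piLift false)

end Lifts

theorem unique_ergodic_lift_over_bistrip_general {N : ℕ} (f : Fin N → ℝ → ℝ)
    (part : Fin N → Bool) (lam0 : Measure (BSeq N)) (lam : Measure (ℤ → DSym N))
    (p : DSym N → ℝ≥0∞) (P : DSym N → DSym N → ℝ≥0∞)
    (hlam : IsMarkov lam p P) (hsym : SymMarkov p P)
    (hproj : lam.map (projSeq (N := N)) = lam0)
    (S : Set (SigmaA N part × ℝ)) (hattr : Gmap f '' S ⊆ interior S)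
    (hbij : Set.BijOn (PiMap (N := N) (part := part)) S
      (PiMap (N := N) (part := part) '' S))
    (μ : Measure (SigmaA N part × ℝ)) [IsProbabilityMeasure μ]
    (hergμ : Ergodic (Gmap f) μ) (hμbase : μ.map (baseA (N := N) (part := part)) = lam)
    (huniq : ∀ μ₂ : Measure (SigmaA N part × ℝ), IsProbabilityMeasure μ₂ →
      Ergodic (Gmap f) μ₂ → μ₂ Sᶜ = 0 →
      μ₂.map (baseA (N := N) (part := part)) = lam → μ₂ = μ) :
    ((μ.map (PiMap (N := N) (part := part))).map Prod.fst = lam0) ∧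
    ∀ ν : Measure (BSeq N × ℝ), IsProbabilityMeasure ν → Ergodic (Fmap f) ν →
      ν ((PiMap (N := N) (part := part) '' S)ᶜ) = 0 →
      ν.map Prod.fst = lam0 →
      ν = μ.map (PiMap (N := N) (part := part)) := by
  have hbase : ∀ ρ : Measure (SigmaA N part × ℝ),
      (ρ.map PiMap).map Prod.fst = (ρ.map baseA).map projSeq := fun ρ => by
    rw [Measure.map_map measurable_fst measurable_PiMap,
      Measure.map_map measurable_projSeq measurable_baseA]
    rfl
  refine ⟨by rw [hbase, hμbase, hproj], fun ν _ hergν hνS hνbase => ?_⟩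
  -- `S` need not be measurable, but its interior is, and `G` maps `S` into it.
  have hU : MeasurableSet (interior S) := isOpen_interior.measurableSet
  set j := piSection part (interior S)
  have hj : Measurable j := measurable_piSection hU
  have hTS : MapsTo (Gmap f) S (interior S) := fun z hz => hattr (mem_image_of_mem _ hz)
  have hjU : ∀ᵐ q ∂ν, j q ∈ interior S :=
    ae_section_mem hergν.toMeasurePreserving (PiMap_Gmap f) hTS
      (fun _ => piSection_PiMap_mem) (hj hU) hνS
  have hsemi : j ∘ Fmap f =ᵐ[ν] Gmap f ∘ j :=
    ae_semiconj_section (PiMap_piSection _) (PiMap_Gmap f) hTS interior_subset hbij.injOn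
      hergν.toMeasurePreserving.quasiMeasurePreserving hjU
  have hergν₁ : Ergodic (Gmap f) (ν.map j) :=
    hergν.map_of_ae_semiconj hj hergμ.toMeasurePreserving.measurable hsemi
  have hν₁S : ν.map j Sᶜ = 0 := measure_mono_null (compl_subset_compl.2 interior_subset)
    (by rw [Measure.map_apply hj hU.compl]; exact ae_iff.1 hjU)
  have hPi : (ν.map j).map PiMap = ν := by
    rw [Measure.map_map measurable_PiMap hj,
      show PiMap ∘ j = id from funext (PiMap_piSection _), Measure.map_id]
  have := Measure.isProbabilityMeasure_map (μ := ν) hj.aemeasurable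
  have hν₁base : (ν.map j).map baseA = lam := by
    have := Measure.isProbabilityMeasure_map (μ := μ) measurable_baseA.aemeasurable
    rw [← hμbase] at hlam ⊢
    exact map_baseA_eq_of_map_PiMap_fst_eq (ergodic_map_baseA hergμ)
      (ergodic_map_baseA hergν₁).toMeasurePreserving (hlam.map_mirrorSeq_eq hsym)
      (by rw [hPi, hνbase, hbase, hμbase, hproj])
  rw [← hPi, huniq _ inferInstance hergν₁ hν₁S hν₁base]

/-- **Lemma (uniqueness of the ergodic lift over a bi-strip).** In the generic setting,
let `S` be an attracting strip for `G` disjoint from its mirrored strip `τ(S)`, so that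
`Π` restricts to bijections of `S` and `τ(S)` onto the bi-strip `S₀ = Π(S)`, and let `μ`
be the unique ergodic `G`-invariant measure on `S` whose base projection is the symmetric
Markov extension `lam` of `λ₀`. Then `Π_*μ` is the unique ergodic `F`-invariant measure
supported in `S₀` whose base projection is `λ₀`. -/
theorem unique_ergodic_lift_over_bistrip {N : ℕ} (f : Fin N → ℝ → ℝ)
    (part : Fin N → Bool) (hor : OrientPart f part)
    (hcont : ∀ i, Continuous (f i))
    (hinj : ∀ i, Set.InjOn (f i) I01)
    (habs : ∀ i, Set.MapsTo (f i) I01 (interior I01))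
    (lam0 : Measure (BSeq N)) [IsProbabilityMeasure lam0]
    (p0 : Fin N → ℝ≥0∞) (P0 : Fin N → Fin N → ℝ≥0∞)
    (h0 : IsMarkov lam0 p0 P0) (h0s : IsStochastic p0 P0)
    (lam : Measure (ℤ → DSym N))
    (p : DSym N → ℝ≥0∞) (P : DSym N → DSym N → ℝ≥0∞)
    (hlam : IsMarkov lam p P) (hlams : IsStochastic p P)
    (hcompat : CompatA part P) (hsym : SymMarkov p P)
    (hproj : lam.map (projSeq (N := N)) = lam0)
    (φ ψ : SigmaA N part → ℝ) (hφψ : ∀ ω, φ ω < ψ ω)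
    (S : Set (SigmaA N part × ℝ)) (hS : S = strip φ ψ)
    (hattr : Gmap f '' S ⊆ interior S)
    (hdisj : Disjoint S (tauMap (N := N) (part := part) '' S))
    (hbij : Set.BijOn (PiMap (N := N) (part := part)) S
      (PiMap (N := N) (part := part) '' S))
    (hbij' : Set.BijOn (PiMap (N := N) (part := part))
      (tauMap (N := N) (part := part) '' S) (PiMap (N := N) (part := part) '' S))
    (μ : Measure (SigmaA N part × ℝ)) [IsProbabilityMeasure μ]
    (hergμ : Ergodic (Gmap f) μ) (hμS : μ Sᶜ = 0)
    (hμbase : μ.map (baseA (N := N) (part := part)) = lam)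
    (huniq : ∀ μ₂ : Measure (SigmaA N part × ℝ), IsProbabilityMeasure μ₂ →
      Ergodic (Gmap f) μ₂ → μ₂ Sᶜ = 0 →
      μ₂.map (baseA (N := N) (part := part)) = lam → μ₂ = μ) :
    ((μ.map (PiMap (N := N) (part := part))).map Prod.fst = lam0) ∧
    ∀ ν : Measure (BSeq N × ℝ), IsProbabilityMeasure ν → Ergodic (Fmap f) ν →
      ν ((PiMap (N := N) (part := part) '' S)ᶜ) = 0 →
      ν.map Prod.fst = lam0 →
      ν = μ.map (PiMap (N := N) (part := part)) :=
  unique_ergodic_lift_over_bistrip_general f part lam0 lam p P hlam hsym hproj S hattr hbij μ hergμ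
    hμbase huniq
end
end
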